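/- Let n ≥ 2 and let D ⊆ 2^[n] be a down set with ∅ ∈ D such that no member of D contains the element n (so D ⊆ 2^[n−1]). Let U = 2^[n] \ D and U' = 2^[n−1] \ D, and suppose U' is nonempty. Then sdepth(U) ≥ sdepth(U'). (This is the reduction step showing a minimal counterexample has every element of [n] in some facet: the sets containing n form the single interval [{n},[n]], which is appended to a partition of U'.) -/

import Mathlib

open Finset

/-- An interval partition of a family `Q` of subsets of `[n]` (identified with `Fin n`):
a finite collection of nonempty intervals `[A,B]`, each contained in `Q`, pairwise
disjoint, and covering `Q`. -/
structure IntervalPartition (n : ℕ) (Q : Finset (Finset (Fin n))) where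
  pairs : Finset (Finset (Fin n) × Finset (Fin n))
  le : ∀ p ∈ pairs, p.1 ⊆ p.2
  sub : ∀ p ∈ pairs, Finset.Icc p.1 p.2 ⊆ Q
  disj : ∀ p ∈ pairs, ∀ q ∈ pairs, p ≠ q →
    Disjoint (Finset.Icc p.1 p.2) (Finset.Icc q.1 q.2)
  covers : ∀ C ∈ Q, ∃ p ∈ pairs, C ∈ Finset.Icc p.1 p.2

/-- The Stanley depth of a family `Q`: the largest `k` such that some interval
partition of `Q` has every interval's maximal element of size at least `k`. -/
noncomputable def sdepth {n : ℕ} (Q : Finset (Finset (Fin n))) : ℕ :=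
  sSup {k | ∃ P : IntervalPartition n Q, ∀ p ∈ P.pairs, k ≤ p.2.card}

/-- `D` is a down set in `2^[n]`. -/
def IsDownSet {n : ℕ} (D : Finset (Finset (Fin n))) : Prop :=
  ∀ B ∈ D, ∀ A, A ⊆ B → A ∈ D

/-- `B` is a maximal element of the family `D`. -/
def MaxElt {n : ℕ} (D : Finset (Finset (Fin n))) (B : Finset (Fin n)) : Prop :=
  B ∈ D ∧ ∀ C ∈ D, B ⊆ C → B = C

/-
The sets containing `n` form the interval `[{n}, [n]]`, which is disjoint from `U'`
and together with `U'` makes up `U`. Appending it to an interval partition of `U'` gives an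
interval partition of `U` whose new interval has the largest possible top, `[n]`.
-/

namespace IntervalPartition

variable {n : ℕ} {Q : Finset (Finset (Fin n))}

theorem snd_mem (P : IntervalPartition n Q) {p : Finset (Fin n) × Finset (Fin n)}
    (hp : p ∈ P.pairs) : p.2 ∈ Q :=
  P.sub p hp (right_mem_Icc.mpr (P.le p hp))

def singletons (Q : Finset (Finset (Fin n))) : IntervalPartition n Q where
  pairs := Q.image fun B => (B, B)
  le := by
    simp only [forall_mem_image, subset_refl, implies_true]
  sub := by
    simp only [forall_mem_image, Icc_self, singleton_subset_iff, imp_self, implies_true]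
  disj := by
    simp only [forall_mem_image, Icc_self, ne_eq, Prod.mk.injEq, and_self,
      disjoint_singleton, imp_self, implies_true]
  covers C hC := ⟨(C, C), mem_image_of_mem _ hC, by simp⟩

def insertInterval (P : IntervalPartition n Q) {A B : Finset (Fin n)} (hAB : A ⊆ B)
    (hdisj : Disjoint Q (Icc A B)) : IntervalPartition n (Q ∪ Icc A B) where
  pairs := insert (A, B) P.pairs
  le := forall_mem_insert _ _ _ |>.mpr ⟨hAB, P.le⟩
  sub := forall_mem_insert _ _ _ |>.mpr
    ⟨subset_union_right, fun p hp => (P.sub p hp).trans subset_union_left⟩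
  disj p hp q hq hpq := by
    have hnew : ∀ r ∈ P.pairs, Disjoint (Icc A B) (Icc r.1 r.2) := fun r hr =>
      (hdisj.mono_left (P.sub r hr)).symm
    rcases mem_insert.mp hp with rfl | hp <;> rcases mem_insert.mp hq with rfl | hq
    · exact absurd rfl hpq
    · exact hnew q hq
    · exact (hnew p hp).symm
    · exact P.disj p hp q hq hpq
  covers C hC := by
    rcases mem_union.mp hC with hCQ | hCAB
    · obtain ⟨p, hp, hCp⟩ := P.covers C hCQ
      exact ⟨p, mem_insert_of_mem hp, hCp⟩
    · exact ⟨(A, B), mem_insert_self _ _, hCAB⟩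

end IntervalPartition

section Sdepth

variable {n : ℕ} {Q : Finset (Finset (Fin n))}

theorem sdepth_bddAbove (hQ : Q.Nonempty) :
    BddAbove {k | ∃ P : IntervalPartition n Q, ∀ p ∈ P.pairs, k ≤ p.2.card} := by
  refine ⟨n, fun k ⟨P, hP⟩ => ?_⟩
  obtain ⟨C, hC⟩ := hQ
  obtain ⟨p, hp, -⟩ := P.covers C hC
  simpa using (hP p hp).trans (card_le_univ p.2)

theorem le_sdepth (hQ : Q.Nonempty) (P : IntervalPartition n Q) {k : ℕ}
    (hP : ∀ p ∈ P.pairs, k ≤ p.2.card) : k ≤ sdepth Q :=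
  le_csSup (sdepth_bddAbove hQ) ⟨P, hP⟩

theorem sdepth_le_sdepth_union_Icc (hQ : Q.Nonempty) {A B : Finset (Fin n)} (hAB : A ⊆ B)
    (hdisj : Disjoint Q (Icc A B)) (hB : ∀ C ∈ Q, C.card ≤ B.card) :
    sdepth Q ≤ sdepth (Q ∪ Icc A B) := by
  refine csSup_le ⟨0, IntervalPartition.singletons Q, fun _ _ => Nat.zero_le _⟩ ?_
  rintro k ⟨P, hP⟩
  have hkB : k ≤ B.card := by
    obtain ⟨C, hC⟩ := hQ
    obtain ⟨p, hp, -⟩ := P.covers C hC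
    exact (hP p hp).trans (hB _ (P.snd_mem hp))
  refine le_sdepth ⟨A, mem_union_right _ (left_mem_Icc.mpr hAB)⟩ (P.insertInterval hAB hdisj) ?_
  exact forall_mem_insert _ _ _ |>.mpr ⟨hkB, hP⟩

end Sdepth

theorem powerset_erase_sdiff_union_Icc {n : ℕ} {x : Fin n} {D : Finset (Finset (Fin n))}
    (hx : ∀ A ∈ D, x ∉ A) :
    (univ.erase x).powerset \ D ∪ Icc {x} univ = univ \ D := by
  ext C
  by_cases hxC : x ∈ C
  · simpa [hxC] using fun hCD => hx C hCD hxC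
  · simp [hxC, subset_erase]

theorem reduction_vertex_in_no_facet_general
    (n : ℕ) (x : Fin n)
    (D : Finset (Finset (Fin n)))
    (hx : ∀ A ∈ D, x ∉ A)
    (hU' : ((Finset.univ.erase x).powerset \ D).Nonempty) :
    sdepth ((Finset.univ.erase x).powerset \ D) ≤
      sdepth ((Finset.univ : Finset (Finset (Fin n))) \ D) := by
  have hdisj : Disjoint ((univ.erase x).powerset \ D) (Icc {x} univ) := by
    refine disjoint_left.mpr fun C hC hxC => ?_
    have hCsub : C ⊆ univ.erase x := mem_powerset.mp (mem_sdiff.mp hC).1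
    exact notMem_erase x univ (hCsub ((mem_Icc.mp hxC).1 (mem_singleton_self x)))
  rw [← powerset_erase_sdiff_union_Icc hx]
  exact sdepth_le_sdepth_union_Icc hU' (subset_univ _) hdisj fun C _ => card_le_univ C

/-- If no member of the down set `D ⊆ 2^[n]` contains the element `x` (playing the
role of `n`), so `D ⊆ 2^([n] \ {x})`, then with `U = 2^[n] \ D` and
`U' = 2^([n] \ {x}) \ D` nonempty, we have `sdepth(U) ≥ sdepth(U')`. -/
theorem reduction_vertex_in_no_facet
    (n : ℕ) (hn : 2 ≤ n) (x : Fin n)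
    (D : Finset (Finset (Fin n))) (hD : IsDownSet D) (h0 : ∅ ∈ D)
    (hx : ∀ A ∈ D, x ∉ A)
    (hU' : ((Finset.univ.erase x).powerset \ D).Nonempty) :
    sdepth ((Finset.univ.erase x).powerset \ D) ≤
      sdepth ((Finset.univ : Finset (Finset (Fin n))) \ D) :=
  reduction_vertex_in_no_facet_general n x D hx hU'
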